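/- arXiv:math/0110019 — 2 statements merged into one kernel-verified Lean document; each statement's English description precedes it below -/
import Mathlib

section
/- Let V be an oriented 4-dimensional real inner product space, J a self-dual orthogonal complex structure with 2-form α(x,y) = ⟨Jx, y⟩, L an anti-self-dual orthogonal complex structure with 2-form β(x,y) = ⟨Lx, y⟩, and let P be a 2-dimensional subspace of V with a chosen orientation. Then there exists a positively oriented orthonormal basis (e₁,e₂,e₃,e₄) of V such that (e₁,e₂) is a positively oriented orthonormal basis of P, and there exist real numbers η₁, ζ₁, η₂, ζ₂ with η₁² + ζ₁² = 1, η₂² + ζ₂² = 1, η₁ = α(e₁,e₂), η₂ = β(e₁,e₂), such that the matrix (α(e_A,e_B)) equals [[0, η₁, ζ₁, 0], [−η₁, 0, 0, −ζ₁], [−ζ₁, 0, 0, η₁], [0, ζ₁, −η₁, 0]] and the matrix (β(e_A,e_B)) equals [[0, η₂, ζ₂, 0], [−η₂, 0, 0, ζ₂], [−ζ₂, 0, 0, −η₂], [0, −ζ₂, η₂, 0]]. -/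
/-!
In an oriented orthonormal basis, the matrix of the 2-form of an orthogonal complex structure is
skew-symmetric with unit rows; if its Pfaffian is `ε = ±1` (self-dual: `ε = 1`, anti-self-dual:
`ε = -1`) these constraints force it into the shape `standardForm ε a b c`. Rotating the first two
basis vectors by `ψ` (inside `P`) and the last two by `φ` rotates `(b, c)` by the angle `φ + εψ`.
Choosing `φ + ψ` and `φ - ψ` to kill `c` for `J` and for `L` respectively gives the normal form.
-/

open Module Real
open scoped RealInnerProductSpace
open scoped Matrix

def pfaffian (ω : Matrix (Fin 4) (Fin 4) ℝ) : ℝ := ω 0 1 * ω 2 3 - ω 0 2 * ω 1 3 + ω 0 3 * ω 1 2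

def standardForm (ε a b c : ℝ) : Matrix (Fin 4) (Fin 4) ℝ :=
  !![0, a, b, c; -a, 0, ε * c, -(ε * b); -b, -(ε * c), 0, ε * a; -c, ε * b, -(ε * a), 0]

theorem eq_standardForm_of_pfaffian_eq {ω : Matrix (Fin 4) (Fin 4) ℝ} {ε : ℝ}
    (hskew : ∀ A B, ω A B = -ω B A) (hrow : ∀ A, ∑ B, ω A B ^ 2 = 1) (hε : ε ^ 2 = 1)
    (hpf : pfaffian ω = ε) : ω = standardForm ε (ω 0 1) (ω 0 2) (ω 0 3) := by
  have hdiag : ∀ A, ω A A = 0 := fun A => by linarith [hskew A A]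
  have hrows := fun A => (Fin.sum_univ_four _).symm.trans (hrow A)
  have h0 := hrows 0
  have h1 := hrows 1
  have h2 := hrows 2
  have h3 := hrows 3
  simp only [hdiag] at h0 h1 h2 h3
  rw [hskew 1 0] at h1
  rw [hskew 2 0, hskew 2 1] at h2
  rw [hskew 3 0, hskew 3 1, hskew 3 2] at h3
  unfold pfaffian at hpf
  -- The six entries above the diagonal have squares summing to 2, so
  -- `‖(ω₂₃, -ω₁₃, ω₁₂) - ε (ω₀₁, ω₀₂, ω₀₃)‖² = 2 - 2 ε pf ω = 0`.
  have hsq : (ω 2 3 - ε * ω 0 1) ^ 2 + (ω 1 3 + ε * ω 0 2) ^ 2 + (ω 1 2 - ε * ω 0 3) ^ 2 = 0 := by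
    linear_combination (h0 + h1 + h2 + h3) / 2 + (ω 0 1 ^ 2 + ω 0 2 ^ 2 + ω 0 3 ^ 2 - 2) * hε
      - 2 * ε * hpf
  have hrel : ω 2 3 = ε * ω 0 1 ∧ ω 1 3 = -(ε * ω 0 2) ∧ ω 1 2 = ε * ω 0 3 := by
    refine ⟨?_, ?_, ?_⟩ <;> nlinarith [sq_nonneg (ω 2 3 - ε * ω 0 1),
      sq_nonneg (ω 1 3 + ε * ω 0 2), sq_nonneg (ω 1 2 - ε * ω 0 3)]
  ext A B
  fin_cases A <;> fin_cases B <;> simp [standardForm, hdiag, hrel]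
  all_goals rw [hskew] <;> simp [hrel]

theorem standardForm_one_zero (a b : ℝ) :
    standardForm 1 a b 0 = !![0, a, b, 0; -a, 0, 0, -b; -b, 0, 0, a; 0, b, -a, 0] := by
  ext i j; fin_cases i <;> fin_cases j <;> simp [standardForm]

theorem standardForm_neg_one_zero (a b : ℝ) :
    standardForm (-1) a b 0 = !![0, a, b, 0; -a, 0, 0, b; -b, 0, 0, -a; 0, -b, a, 0] := by
  ext i j; fin_cases i <;> fin_cases j <;> simp [standardForm]

noncomputable def rotationMatrix (ψ : ℝ) : Matrix (Fin 2) (Fin 2) ℝ :=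
  !![cos ψ, -sin ψ; sin ψ, cos ψ]

noncomputable def doubleRotation (ψ φ : ℝ) : Matrix (Fin 4) (Fin 4) ℝ :=
  !![cos ψ, -sin ψ, 0, 0; sin ψ, cos ψ, 0, 0; 0, 0, cos φ, -sin φ; 0, 0, sin φ, cos φ]

theorem rotationMatrix_transpose_mul_self (ψ : ℝ) :
    (rotationMatrix ψ)ᵀ * rotationMatrix ψ = 1 := by
  ext i j
  fin_cases i <;> fin_cases j <;> simp [rotationMatrix, Matrix.mul_apply] <;> ring_nf <;> simp

theorem det_rotationMatrix (ψ : ℝ) : (rotationMatrix ψ).det = 1 := by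
  simp [rotationMatrix, Matrix.det_fin_two_of, ← sq]

theorem doubleRotation_transpose_mul_self (ψ φ : ℝ) :
    (doubleRotation ψ φ)ᵀ * doubleRotation ψ φ = 1 := by
  ext i j
  fin_cases i <;> fin_cases j <;> simp [doubleRotation, Matrix.mul_apply, Fin.sum_univ_four] <;>
    ring_nf <;> simp

theorem det_doubleRotation (ψ φ : ℝ) : (doubleRotation ψ φ).det = 1 := by
  simp [doubleRotation, Matrix.det_succ_row_zero, Fin.sum_univ_succ,
    show (Fin.succAbove 1 2 : Fin 4) = 3 from rfl]
  linear_combination (cos ψ ^ 2 + sin ψ ^ 2) * cos_sq_add_sin_sq φ + cos_sq_add_sin_sq ψ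

theorem doubleRotation_transpose_mul_standardForm_mul_apply_zero_three {ε : ℝ}
    (hε : ε = 1 ∨ ε = -1) (a b c ψ φ : ℝ) :
    ((doubleRotation ψ φ)ᵀ * standardForm ε a b c * doubleRotation ψ φ) 0 3 =
      c * cos (φ + ε * ψ) - b * sin (φ + ε * ψ) := by
  rcases hε with rfl | rfl <;>
    simp [doubleRotation, standardForm, Matrix.mul_apply, Fin.sum_univ_four, cos_add, sin_add] <;>
    ring

theorem exists_mul_cos_eq_mul_sin (b c : ℝ) : ∃ θ : ℝ, c * cos θ = b * sin θ := by
  by_cases hz : (⟨b, c⟩ : ℂ) = 0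
  · simp_all [Complex.ext_iff]
  · refine ⟨Complex.arg ⟨b, c⟩, ?_⟩
    rw [Complex.cos_arg hz, Complex.sin_arg]
    ring

section OrthonormalBasis

variable {V : Type*} [NormedAddCommGroup V] [InnerProductSpace ℝ V]

theorem OrthonormalBasis.exists_apply_eq_sum_smul {ι : Type*} [Fintype ι] [DecidableEq ι]
    (g : OrthonormalBasis ι ℝ V) {M : Matrix ι ι ℝ} (hM : Mᵀ * M = 1) :
    ∃ e : OrthonormalBasis ι ℝ V, (∀ i, e i = ∑ j, M j i • g j) ∧
      (e.toBasis.orientation = g.toBasis.orientation ↔ 0 < M.det) := by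
  set w : ι → V := fun i => ∑ j, M j i • g j
  have hinner : ∀ j i, ⟪g j, w i⟫ = M j i := fun j i => g.orthonormal.inner_right_fintype _ j
  have hw : Orthonormal ℝ w := by
    rw [orthonormal_iff_ite]
    intro i k
    simp only [w, sum_inner, real_inner_smul_left, hinner, ← Matrix.one_apply, ← hM,
      Matrix.mul_apply, Matrix.transpose_apply]
  have : FiniteDimensional ℝ V := Module.Finite.of_basis g.toBasis
  have hspan := hw.linearIndependent.span_eq_top_of_card_eq_finrank'
    (finrank_eq_card_basis g.toBasis).symm
  refine ⟨OrthonormalBasis.mk hw hspan.ge, fun i => by simp [w], ?_⟩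
  rw [eq_comm, Basis.orientation_eq_iff_det_pos, OrthonormalBasis.coe_toBasis,
    OrthonormalBasis.coe_mk, Basis.det_apply]
  congr! 2
  ext j i
  rw [Basis.toMatrix_apply, OrthonormalBasis.coe_toBasis_repr_apply, g.repr_apply_apply, hinner]

theorem OrthonormalBasis.exists_extension [FiniteDimensional ℝ V] {P : Submodule ℝ V} {m n : ℕ}
    (f : OrthonormalBasis (Fin m) ℝ P) (hmn : m ≤ n) (hV : finrank ℝ V = n) :
    ∃ g : OrthonormalBasis (Fin n) ℝ V, ∀ i, g (Fin.castLE hmn i) = f i := by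
  set v : Fin n → V := fun k => if h : (k : ℕ) < m then (f ⟨k, h⟩ : V) else 0
  have hv : ∀ i, v (Fin.castLE hmn i) = f i := fun i => by simp [v]
  have hon : Orthonormal ℝ ((Set.range (Fin.castLE hmn)).domRestrict v) := by
    rw [orthonormal_iff_ite]
    rintro ⟨_, i, rfl⟩ ⟨_, j, rfl⟩
    simp only [Set.domRestrict_apply, hv, ← Submodule.coe_inner,
      orthonormal_iff_ite.mp f.orthonormal]
    exact if_congr (by simp [Subtype.ext_iff]) rfl rfl
  obtain ⟨g, hg⟩ := hon.exists_orthonormalBasis_extension_of_card_eq (by simp [hV])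
  exact ⟨g, fun i => (hg _ ⟨i, rfl⟩).trans (hv i)⟩

theorem OrthonormalBasis.exists_orientation_eq_of_apply_ne {ι : Type*} [Fintype ι] [DecidableEq ι]
    (g : OrthonormalBasis ι ℝ V) (o : Orientation ℝ V ι) (k : ι) :
    ∃ e : OrthonormalBasis ι ℝ V, e.toBasis.orientation = o ∧ ∀ i ≠ k, e i = g i := by
  rcases g.toBasis.orientation_eq_or_eq_neg o with ho | ho
  · exact ⟨g, ho.symm, fun _ _ => rfl⟩
  set d : ι → ℝ := Function.update 1 k (-1)
  have hd : d * d = 1 := by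
    ext i; by_cases hi : i = k <;> simp [d, hi]
  obtain ⟨e, he, heo⟩ := g.exists_apply_eq_sum_smul (M := Matrix.diagonal d)
    (by rw [Matrix.diagonal_transpose, Matrix.diagonal_mul_diagonal, ← Pi.mul_def, hd]
        exact Matrix.diagonal_one)
  refine ⟨e, ?_, fun i hi => by simp [he, d, Matrix.diagonal_apply, hi]⟩
  rw [ho, ← g.toBasis.orientation_ne_iff_eq_neg, Ne, heo]
  simp [d, Finset.prod_update_of_mem]

end OrthonormalBasis

section ComplexStructure

variable {V : Type*} [NormedAddCommGroup V] [InnerProductSpace ℝ V] {J : V →ₗ[ℝ] V}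

noncomputable def formMatrix {ι : Type*} [Fintype ι] (J : V →ₗ[ℝ] V)
    (e : OrthonormalBasis ι ℝ V) : Matrix ι ι ℝ :=
  Matrix.of fun A B => ⟪J (e A), e B⟫

theorem inner_map_eq_neg_inner_map (hJ2 : ∀ x, J (J x) = -x)
    (hJo : ∀ x y, ⟪J x, J y⟫ = ⟪x, y⟫) (x y : V) : ⟪J x, y⟫ = -⟪J y, x⟫ := by
  rw [← hJo, hJ2, inner_neg_left, real_inner_comm]

theorem sum_formMatrix_sq {ι : Type*} [Fintype ι] (hJo : ∀ x y, ⟪J x, J y⟫ = ⟪x, y⟫)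
    (e : OrthonormalBasis ι ℝ V) (A : ι) : ∑ B, formMatrix J e A B ^ 2 = 1 := by
  simp only [formMatrix, Matrix.of_apply]
  rw [e.sum_sq_inner_left, ← real_inner_self_eq_norm_sq, hJo, real_inner_self_eq_norm_sq,
    e.orthonormal.1 A, one_pow]

theorem formMatrix_eq_transpose_mul_mul {ι : Type*} [Fintype ι] (J : V →ₗ[ℝ] V)
    {e g : OrthonormalBasis ι ℝ V} {M : Matrix ι ι ℝ} (he : ∀ i, e i = ∑ j, M j i • g j) :
    formMatrix J e = Mᵀ * formMatrix J g * M := by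
  ext A B
  simp only [formMatrix, Matrix.of_apply, Matrix.mul_apply, Matrix.transpose_apply, he, map_sum,
    map_smul, sum_inner, inner_sum, real_inner_smul_left, real_inner_smul_right, Finset.sum_mul]
  exact Finset.sum_congr rfl fun _ _ => Finset.sum_congr rfl fun _ _ => by ring

theorem formMatrix_eq_standardForm (hJ2 : ∀ x, J (J x) = -x)
    (hJo : ∀ x y, ⟪J x, J y⟫ = ⟪x, y⟫) {e : OrthonormalBasis (Fin 4) ℝ V} {ε : ℝ}
    (hε : ε ^ 2 = 1) (hpf : pfaffian (formMatrix J e) = ε) :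
    formMatrix J e =
      standardForm ε (formMatrix J e 0 1) (formMatrix J e 0 2) (formMatrix J e 0 3) :=
  eq_standardForm_of_pfaffian_eq (fun _ _ => inner_map_eq_neg_inner_map hJ2 hJo _ _)
    (sum_formMatrix_sq hJo e) hε hpf

theorem formMatrix_apply_zero_three_of_doubleRotation (hJ2 : ∀ x, J (J x) = -x)
    (hJo : ∀ x y, ⟪J x, J y⟫ = ⟪x, y⟫) {ε : ℝ} (hε : ε = 1 ∨ ε = -1)
    {e g : OrthonormalBasis (Fin 4) ℝ V} (hpf : pfaffian (formMatrix J g) = ε) {ψ φ : ℝ}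
    (he : ∀ i, e i = ∑ j, doubleRotation ψ φ j i • g j) :
    formMatrix J e 0 3 =
      formMatrix J g 0 3 * cos (φ + ε * ψ) - formMatrix J g 0 2 * sin (φ + ε * ψ) := by
  have hε2 : ε ^ 2 = 1 := by rcases hε with rfl | rfl <;> norm_num
  rw [formMatrix_eq_transpose_mul_mul J he, formMatrix_eq_standardForm hJ2 hJo hε2 hpf]
  exact doubleRotation_transpose_mul_standardForm_mul_apply_zero_three hε _ _ _ _ _

theorem formMatrix_eq_standardForm_of_apply_zero_three (hJ2 : ∀ x, J (J x) = -x)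
    (hJo : ∀ x y, ⟪J x, J y⟫ = ⟪x, y⟫) {e : OrthonormalBasis (Fin 4) ℝ V} {ε : ℝ}
    (hε : ε ^ 2 = 1) (hpf : pfaffian (formMatrix J e) = ε) (h03 : formMatrix J e 0 3 = 0) :
    formMatrix J e = standardForm ε (formMatrix J e 0 1) (formMatrix J e 0 2) 0 ∧
      formMatrix J e 0 1 ^ 2 + formMatrix J e 0 2 ^ 2 = 1 := by
  have hω := formMatrix_eq_standardForm hJ2 hJo hε hpf
  rw [h03] at hω
  have hrow := sum_formMatrix_sq hJo e 0
  rw [hω, Fin.sum_univ_four] at hrow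
  exact ⟨hω, by simpa [standardForm] using hrow⟩

end ComplexStructure

/-- Simultaneous normal form (Proposition 3 of the paper): given a self-dual orthogonal
complex structure `J` (with form `α`), an anti-self-dual orthogonal complex structure `L`
(with form `β`), and an oriented two-plane `P`, there is a positively oriented orthonormal
basis `(e₁,e₂,e₃,e₄)` of `V` whose first two vectors form a positively oriented orthonormal
basis of `P`, in which `α` and `β` take the standard matrix forms determined by
`η₁ = α(e₁,e₂)` and `η₂ = β(e₁,e₂)`. -/
theorem simultaneous_normal_form
    {V : Type*} [NormedAddCommGroup V] [InnerProductSpace ℝ V]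
    (hdim : Module.finrank ℝ V = 4)
    (o : Orientation ℝ V (Fin 4))
    (J L : V →ₗ[ℝ] V)
    (hJ2 : ∀ x : V, J (J x) = -x) (hJo : ∀ x y : V, ⟪J x, J y⟫ = ⟪x, y⟫)
    (hL2 : ∀ x : V, L (L x) = -x) (hLo : ∀ x y : V, ⟪L x, L y⟫ = ⟪x, y⟫)
    (hJsd : ∀ e : OrthonormalBasis (Fin 4) ℝ V, e.toBasis.orientation = o →
      ⟪J (e 0), e 1⟫ * ⟪J (e 2), e 3⟫ - ⟪J (e 0), e 2⟫ * ⟪J (e 1), e 3⟫ +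
        ⟪J (e 0), e 3⟫ * ⟪J (e 1), e 2⟫ = 1)
    (hLasd : ∀ e : OrthonormalBasis (Fin 4) ℝ V, e.toBasis.orientation = o →
      ⟪L (e 0), e 1⟫ * ⟪L (e 2), e 3⟫ - ⟪L (e 0), e 2⟫ * ⟪L (e 1), e 3⟫ +
        ⟪L (e 0), e 3⟫ * ⟪L (e 1), e 2⟫ = -1)
    (P : Submodule ℝ V) (hP : Module.finrank ℝ P = 2)
    (oP : Orientation ℝ P (Fin 2)) :
    ∃ (e : OrthonormalBasis (Fin 4) ℝ V) (f : OrthonormalBasis (Fin 2) ℝ P)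
      (η₁ ζ₁ η₂ ζ₂ : ℝ),
      e.toBasis.orientation = o ∧ f.toBasis.orientation = oP ∧
      (f 0 : V) = e 0 ∧ (f 1 : V) = e 1 ∧
      η₁ ^ 2 + ζ₁ ^ 2 = 1 ∧ η₂ ^ 2 + ζ₂ ^ 2 = 1 ∧
      η₁ = ⟪J (e 0), e 1⟫ ∧ η₂ = ⟪L (e 0), e 1⟫ ∧
      (∀ A B : Fin 4, ⟪J (e A), e B⟫ =
        !![0, η₁, ζ₁, 0; -η₁, 0, 0, -ζ₁; -ζ₁, 0, 0, η₁; 0, ζ₁, -η₁, 0] A B) ∧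
      (∀ A B : Fin 4, ⟪L (e A), e B⟫ =
        !![0, η₂, ζ₂, 0; -η₂, 0, 0, ζ₂; -ζ₂, 0, 0, -η₂; 0, -ζ₂, η₂, 0] A B) := by
  have : FiniteDimensional ℝ V := .of_finrank_pos (by omega)
  obtain ⟨f₀, hf₀⟩ : ∃ f₀ : OrthonormalBasis (Fin 2) ℝ P, f₀.toBasis.orientation = oP :=
    ⟨_, ((stdOrthonormalBasis ℝ P).reindex (finCongr hP)).orientation_adjustToOrientation oP⟩
  obtain ⟨h, hh⟩ := f₀.exists_extension (by norm_num : 2 ≤ 4) hdim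
  obtain ⟨g, hgo, hg⟩ := h.exists_orientation_eq_of_apply_ne o 3
  obtain ⟨θ₁, hθ₁⟩ := exists_mul_cos_eq_mul_sin (formMatrix J g 0 2) (formMatrix J g 0 3)
  obtain ⟨θ₂, hθ₂⟩ := exists_mul_cos_eq_mul_sin (formMatrix L g 0 2) (formMatrix L g 0 3)
  obtain ⟨e, he, heg⟩ := g.exists_apply_eq_sum_smul
    (doubleRotation_transpose_mul_self ((θ₁ - θ₂) / 2) ((θ₁ + θ₂) / 2))
  obtain ⟨f, hf, hff₀⟩ :=
    f₀.exists_apply_eq_sum_smul (rotationMatrix_transpose_mul_self ((θ₁ - θ₂) / 2))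
  have heo : e.toBasis.orientation = o := (heg.2 (by simp [det_doubleRotation])).trans hgo
  have hJ03 : formMatrix J e 0 3 = 0 := by
    rw [formMatrix_apply_zero_three_of_doubleRotation hJ2 hJo (.inl rfl) (hJsd g hgo) he,
      show (θ₁ + θ₂) / 2 + 1 * ((θ₁ - θ₂) / 2) = θ₁ by ring]
    linarith
  have hL03 : formMatrix L e 0 3 = 0 := by
    rw [formMatrix_apply_zero_three_of_doubleRotation hL2 hLo (.inr rfl) (hLasd g hgo) he,
      show (θ₁ + θ₂) / 2 + -1 * ((θ₁ - θ₂) / 2) = θ₂ by ring]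
    linarith
  obtain ⟨hJe, hJ1⟩ :=
    formMatrix_eq_standardForm_of_apply_zero_three hJ2 hJo (by norm_num) (hJsd e heo) hJ03
  obtain ⟨hLe, hL1⟩ :=
    formMatrix_eq_standardForm_of_apply_zero_three hL2 hLo (by norm_num) (hLasd e heo) hL03
  refine ⟨e, f, _, _, _, _, heo, (hff₀.2 (by simp [det_rotationMatrix])).trans hf₀, ?_, ?_,
    hJ1, hL1, rfl, rfl, fun A B => by rw [← standardForm_one_zero, ← hJe]; rfl,
    fun A B => by rw [← standardForm_neg_one_zero, ← hLe]; rfl⟩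
  all_goals simp [hf, he, rotationMatrix, doubleRotation, Fin.sum_univ_four,
    (hg 0 (by decide)).trans (hh 0), (hg 1 (by decide)).trans (hh 1)]
end

section
/- Let V be a 4-dimensional real inner product space, (e₁,e₂,e₃,e₄) an orthonormal basis of V, and J an orthogonal complex structure whose 2-form ω(x,y) = ⟨Jx, y⟩ satisfies ω(e₁,e₂) = ω(e₃,e₄) = η, ω(e₁,e₃) = −ω(e₂,e₄) = √(1−η²), ω(e₁,e₄) = ω(e₂,e₃) = 0. Let K be a J-invariant algebraic curvature tensor on V. Then for all X, Y ∈ V: (1−η²)(K(X,Y,e₁,e₂) + K(X,Y,e₃,e₄)) = η√(1−η²)(K(X,Y,e₁,e₃) − K(X,Y,e₂,e₄)). -/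
open scoped RealInnerProductSpace

/-! Since `J` is skew-adjoint, the prescribed values of `ω` determine `J e₁ = η e₂ + √(1-η²) e₃`
and `J e₂ = -η e₁ - √(1-η²) e₄`, and Parseval applied to the unit vector `J e₁` gives
`η² + (√(1-η²))² = 1`. Expanding `K(X,Y,Je₁,Je₂) = K(X,Y,e₁,e₂)` bilinearly then yields the
identity. -/

section ComplexStructure

variable {V : Type*} [NormedAddCommGroup V] [InnerProductSpace ℝ V] {J : V →ₗ[ℝ] V}

theorem inner_apply_left_eq_neg_inner_apply_right (hJ2 : ∀ x : V, J (J x) = -x)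
    (hJo : ∀ x y : V, ⟪J x, J y⟫ = ⟪x, y⟫) (x y : V) : ⟪J x, y⟫ = -⟪x, J y⟫ := by
  rw [← hJo x (J y), hJ2, inner_neg_right, neg_neg]

theorem inner_apply_self_eq_zero (hJ2 : ∀ x : V, J (J x) = -x)
    (hJo : ∀ x y : V, ⟪J x, J y⟫ = ⟪x, y⟫) (x : V) : ⟪J x, x⟫ = 0 := by
  have h := inner_apply_left_eq_neg_inner_apply_right hJ2 hJo x x
  rw [real_inner_comm x (J x)] at h ⊢
  linarith

theorem norm_apply_eq_norm (hJo : ∀ x y : V, ⟪J x, J y⟫ = ⟪x, y⟫) (x : V) : ‖J x‖ = ‖x‖ := by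
  rw [norm_eq_sqrt_real_inner, hJo, ← norm_eq_sqrt_real_inner]

end ComplexStructure

theorem OrthonormalBasis.eq_inner_smul_add_fin_four {V : Type*} [NormedAddCommGroup V]
    [InnerProductSpace ℝ V] (e : OrthonormalBasis (Fin 4) ℝ V) (x : V) :
    x = ⟪x, e 0⟫ • e 0 + ⟪x, e 1⟫ • e 1 + ⟪x, e 2⟫ • e 2 + ⟪x, e 3⟫ • e 3 := by
  conv_lhs => rw [← e.sum_repr' x]
  simp only [Fin.sum_univ_four, real_inner_comm x]

theorem OrthonormalBasis.sum_sq_inner_fin_four {V : Type*} [NormedAddCommGroup V]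
    [InnerProductSpace ℝ V] (e : OrthonormalBasis (Fin 4) ℝ V) (x : V) :
    ⟪x, e 0⟫ ^ 2 + ⟪x, e 1⟫ ^ 2 + ⟪x, e 2⟫ ^ 2 + ⟪x, e 3⟫ ^ 2 = ‖x‖ ^ 2 := by
  rw [← e.sum_sq_inner_left x, Fin.sum_univ_four]

theorem LinearMap.apply_smul_add_smul_of_antisymm {V : Type*} [AddCommGroup V] [Module ℝ V]
    (B : V →ₗ[ℝ] V →ₗ[ℝ] ℝ) (hB : ∀ x y, B x y = -B y x) (η s : ℝ) (a b c d : V) :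
    B (η • b + s • c) (-η • a - s • d) =
      η ^ 2 * B a b + η * s * (B a c - B b d) - s ^ 2 * B c d := by
  simp only [map_add, map_sub, map_smul, LinearMap.add_apply,
    LinearMap.smul_apply, smul_eq_mul, hB b a, hB c a]
  ring

theorem curvature_identity_adapted_basis_general
    {V : Type*} [NormedAddCommGroup V] [InnerProductSpace ℝ V]
    (e : OrthonormalBasis (Fin 4) ℝ V)
    (J : V →ₗ[ℝ] V)
    (hJ2 : ∀ x : V, J (J x) = -x) (hJo : ∀ x y : V, ⟪J x, J y⟫ = ⟪x, y⟫)
    (η : ℝ)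
    (h12 : ⟪J (e 0), e 1⟫ = η)
    (h13 : ⟪J (e 0), e 2⟫ = Real.sqrt (1 - η ^ 2))
    (h24 : ⟪J (e 1), e 3⟫ = -Real.sqrt (1 - η ^ 2))
    (h14 : ⟪J (e 0), e 3⟫ = 0) (h23 : ⟪J (e 1), e 2⟫ = 0)
    (K : V →ₗ[ℝ] V →ₗ[ℝ] V →ₗ[ℝ] V →ₗ[ℝ] ℝ)
    (hK2 : ∀ X Y Z W : V, K X Y Z W = -K X Y W Z)
    (hJinv : ∀ X Y Z W : V, K X Y (J Z) (J W) = K X Y Z W) :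
    ∀ X Y : V,
      (1 - η ^ 2) * (K X Y (e 0) (e 1) + K X Y (e 2) (e 3)) =
        η * Real.sqrt (1 - η ^ 2) * (K X Y (e 0) (e 2) - K X Y (e 1) (e 3)) := by
  intro X Y
  set s := Real.sqrt (1 - η ^ 2)
  have h00 := inner_apply_self_eq_zero hJ2 hJo (e 0)
  have h10 : ⟪J (e 1), e 0⟫ = -η := by
    rw [inner_apply_left_eq_neg_inner_apply_right hJ2 hJo, real_inner_comm, h12]
  have hs : η ^ 2 + s ^ 2 = 1 := by
    have h := e.sum_sq_inner_fin_four (J (e 0))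
    rw [h00, h12, h13, h14, norm_apply_eq_norm hJo, e.orthonormal.1 0] at h
    linarith
  have hJe0 : J (e 0) = η • e 1 + s • e 2 := by
    rw [e.eq_inner_smul_add_fin_four (J (e 0)), h00, h12, h13, h14]
    simp
  have hJe1 : J (e 1) = -η • e 0 - s • e 3 := by
    rw [e.eq_inner_smul_add_fin_four (J (e 1)), h10, inner_apply_self_eq_zero hJ2 hJo, h23, h24]
    module
  have hinv := hJinv X Y (e 0) (e 1)
  rw [hJe0, hJe1, (K X Y).apply_smul_add_smul_of_antisymm (hK2 X Y)] at hinv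
  linear_combination -hinv - K X Y (e 2) (e 3) * hs

/-- In the adapted basis where the Kähler form of `J` has entries
`ω(e₁,e₂) = ω(e₃,e₄) = η`, `ω(e₁,e₃) = -ω(e₂,e₄) = √(1-η²)`, `ω(e₁,e₄) = ω(e₂,e₃) = 0`,
a `J`-invariant algebraic curvature tensor satisfies
`(1−η²)(K(X,Y,e₁,e₂) + K(X,Y,e₃,e₄)) = η√(1−η²)(K(X,Y,e₁,e₃) − K(X,Y,e₂,e₄))`. -/
theorem curvature_identity_adapted_basis
    {V : Type*} [NormedAddCommGroup V] [InnerProductSpace ℝ V]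
    (hdim : Module.finrank ℝ V = 4)
    (e : OrthonormalBasis (Fin 4) ℝ V)
    (J : V →ₗ[ℝ] V)
    (hJ2 : ∀ x : V, J (J x) = -x) (hJo : ∀ x y : V, ⟪J x, J y⟫ = ⟪x, y⟫)
    (η : ℝ)
    (h12 : ⟪J (e 0), e 1⟫ = η) (h34 : ⟪J (e 2), e 3⟫ = η)
    (h13 : ⟪J (e 0), e 2⟫ = Real.sqrt (1 - η ^ 2))
    (h24 : ⟪J (e 1), e 3⟫ = -Real.sqrt (1 - η ^ 2))
    (h14 : ⟪J (e 0), e 3⟫ = 0) (h23 : ⟪J (e 1), e 2⟫ = 0)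
    (K : V →ₗ[ℝ] V →ₗ[ℝ] V →ₗ[ℝ] V →ₗ[ℝ] ℝ)
    (hK1 : ∀ X Y Z W : V, K X Y Z W = -K Y X Z W)
    (hK2 : ∀ X Y Z W : V, K X Y Z W = -K X Y W Z)
    (hK3 : ∀ X Y Z W : V, K X Y Z W = K Z W X Y)
    (hBianchi : ∀ X Y Z W : V, K X Y Z W + K Y Z X W + K Z X Y W = 0)
    (hJinv : ∀ X Y Z W : V, K X Y (J Z) (J W) = K X Y Z W) :
    ∀ X Y : V,
      (1 - η ^ 2) * (K X Y (e 0) (e 1) + K X Y (e 2) (e 3)) =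
        η * Real.sqrt (1 - η ^ 2) * (K X Y (e 0) (e 2) - K X Y (e 1) (e 3)) :=
  curvature_identity_adapted_basis_general e J hJ2 hJo η h12 h13 h24 h14 h23 K hK2 hJinv
end
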